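/- arXiv:1712.04830 — 7 statements merged into one kernel-verified Lean document; each statement's English description precedes it below -/
import Mathlib

section
/- Given an admissible control process (u, x) of the control system ẋ(t) = g(t,x(t))u(t) on [t',t''] with L(t,x(t),u(t)) > 0 and the time-reparametrization τ(t) = ∫_{t'}^t L(s,x(s),u(s)) ds, the function τ is strictly increasing and absolutely continuous, its inverse t(τ) is absolutely continuous, and y(τ) := x(t(τ)), w(τ) := u(t(τ)) satisfy dt/dτ = 1/L(t(τ),y(τ),w(τ)) and dy/dτ = g(t(τ),y(τ))w(τ)/L(t(τ),y(τ),w(τ)) a.e., with total time T = ∫_{t'}^{t''} L(t,x(t),u(t)) dt. -/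
open Set MeasureTheory intervalIntegral NNReal ENNReal

lemma cov_aux {E : Type*} [NormedAddCommGroup E] [NormedSpace ℝ E]
    (Φ : ℝ → ℝ) (hemb : MeasurableEmbedding Φ) (ℓ : ℝ → ℝ≥0) (hℓ : Measurable ℓ)
    (a c τ : ℝ)
    (hmap : Measure.map Φ ((MeasureTheory.volume.restrict (Set.Icc a c)).withDensity
      (fun r => (ℓ r : ℝ≥0∞))) = MeasureTheory.volume.restrict (Set.Icc (0:ℝ) τ))
    (ψ : ℝ → E) :
    ∫ s in Set.Icc (0:ℝ) τ, ψ s = ∫ r in Set.Icc a c, (ℓ r : ℝ) • ψ (Φ r) := by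
  rw [← hmap, hemb.integral_map, integral_withDensity_eq_integral_smul hℓ]
  simp [NNReal.smul_def]

lemma map_aux (a b T τ : ℝ) (F Φ tf : ℝ → ℝ) (ℓ : ℝ → ℝ≥0)
    (hF : StrictMonoOn F (Set.Icc a b))
    (hA : ∀ d ∈ Set.Icc a b, ∫⁻ r in Set.Icc a d, (ℓ r : ℝ≥0∞) = ENNReal.ofReal (F d))
    (hΦ : Measurable Φ) (hΦF : ∀ t ∈ Set.Icc a b, Φ t = F t)
    (hF0 : F a = 0)
    (htf : ∀ σ ∈ Set.Icc (0:ℝ) T, tf σ ∈ Set.Icc a b ∧ F (tf σ) = σ)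
    (hτ : τ ∈ Set.Icc (0:ℝ) T) :
    Measure.map Φ ((MeasureTheory.volume.restrict (Set.Icc a (tf τ))).withDensity
      (fun r => (ℓ r : ℝ≥0∞))) = MeasureTheory.volume.restrict (Set.Icc (0:ℝ) τ) := by
  obtain ⟨hc_mem, hFc⟩ := htf τ hτ
  set c := tf τ with hc
  have hmono : MonotoneOn F (Set.Icc a b) := hF.monotoneOn
  have hsub : Set.Icc a c ⊆ Set.Icc a b := Set.Icc_subset_Icc le_rfl hc_mem.2
  haveI : IsFiniteMeasure ((MeasureTheory.volume.restrict (Set.Icc a c)).withDensity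
      (fun r => (ℓ r : ℝ≥0∞))) := by
    constructor
    rw [withDensity_apply _ MeasurableSet.univ, Measure.restrict_restrict MeasurableSet.univ,
      Set.univ_inter, hA c hc_mem]
    exact ENNReal.ofReal_lt_top
  refine Measure.ext_of_Iic _ _ (fun s => ?_)
  have hSmeas : MeasurableSet (Φ ⁻¹' Set.Iic s) := hΦ measurableSet_Iic
  rw [Measure.map_apply hΦ measurableSet_Iic, Measure.restrict_apply measurableSet_Iic,
    withDensity_apply _ hSmeas, Measure.restrict_restrict hSmeas]
  rcases lt_or_ge s 0 with hs | hs
  · have h1 : Φ ⁻¹' Set.Iic s ∩ Set.Icc a c = ∅ := by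
      ext r
      simp only [Set.mem_inter_iff, Set.mem_preimage, Set.mem_Iic, Set.mem_Icc,
        Set.mem_empty_iff_false, iff_false, not_and]
      intro hΦr har hrc
      have hrab : r ∈ Set.Icc a b := hsub ⟨har, hrc⟩
      rw [hΦF r hrab] at hΦr
      have h0 : F a ≤ F r :=
        hmono (Set.left_mem_Icc.2 (hrab.1.trans hrab.2)) hrab hrab.1
      rw [hF0] at h0
      linarith
    have h2 : Set.Iic s ∩ Set.Icc 0 τ = ∅ := by
      ext r
      simp only [Set.mem_inter_iff, Set.mem_Iic, Set.mem_Icc, Set.mem_empty_iff_false,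
        iff_false, not_and]
      intro h1 h2 h3
      linarith
    rw [h1, h2]
    simp
  · rcases le_or_gt τ s with hts | hts
    · have h1 : Φ ⁻¹' Set.Iic s ∩ Set.Icc a c = Set.Icc a c := by
        refine Set.inter_eq_right.2 (fun r hra => ?_)
        have hrab : r ∈ Set.Icc a b := hsub hra
        simp only [Set.mem_preimage, Set.mem_Iic]
        rw [hΦF r hrab]
        exact le_trans (le_trans (hmono hrab hc_mem hra.2) hFc.le) hts
      have h2 : Set.Iic s ∩ Set.Icc 0 τ = Set.Icc 0 τ :=
        Set.inter_eq_right.2 (fun r hr => le_trans hr.2 hts)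
      rw [h1, h2, hA c hc_mem, hFc, Real.volume_Icc, sub_zero]
    · have hsT : s ∈ Set.Icc (0:ℝ) T := ⟨hs, le_trans hts.le hτ.2⟩
      obtain ⟨hd_mem, hFd⟩ := htf s hsT
      set d := tf s with hd
      have hdc : d ≤ c := by
        by_contra h
        push_neg at h
        have := hF hc_mem hd_mem h
        rw [hFc, hFd] at this
        linarith
      have h1 : Φ ⁻¹' Set.Iic s ∩ Set.Icc a c = Set.Icc a d := by
        ext r
        simp only [Set.mem_inter_iff, Set.mem_preimage, Set.mem_Iic, Set.mem_Icc]
        constructor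
        · rintro ⟨hΦr, hra⟩
          have hrab : r ∈ Set.Icc a b := hsub ⟨hra.1, hra.2⟩
          rw [hΦF r hrab] at hΦr
          refine ⟨hra.1, ?_⟩
          by_contra hrd
          push_neg at hrd
          have := hF hd_mem hrab hrd
          rw [hFd] at this
          linarith
        · rintro ⟨har, hrd⟩
          have hrab : r ∈ Set.Icc a b := ⟨har, le_trans (hrd.trans hdc) hc_mem.2⟩
          constructor
          · rw [hΦF r hrab, ← hFd]
            exact hmono hrab hd_mem hrd
          · exact ⟨har, hrd.trans hdc⟩
      have h2 : Set.Iic s ∩ Set.Icc 0 τ = Set.Icc 0 s := by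
        ext r
        simp only [Set.mem_inter_iff, Set.mem_Iic, Set.mem_Icc]
        constructor
        · rintro ⟨h1, h2, _⟩; exact ⟨h2, h1⟩
        · rintro ⟨h1, h2⟩; exact ⟨h2, h1, h2.trans hts.le⟩
      rw [h1, h2, hA d hd_mem, hFd, Real.volume_Icc, sub_zero]


/-- Proposition 1 (first part): given an admissible process `(u,x)` of `ẋ = g(t,x)u` on
`[t',t'']` with `L > 0` along the trajectory, the reparametrization
`τ(t) = ∫_{t'}^t L(s,x(s),u(s)) ds` is strictly increasing (and absolutely continuous), its
inverse `t(τ)` is absolutely continuous, and `y(τ) = x(t(τ))`, `w(τ) = u(t(τ))` satisfy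
`dt/dτ = 1/L` and `dy/dτ = g w / L` a.e. (expressed in integral form), with total time
`T = ∫_{t'}^{t''} L(t,x(t),u(t)) dt`. -/
theorem stmt4 {n m : ℕ}
    (L : ℝ → EuclideanSpace ℝ (Fin n) → EuclideanSpace ℝ (Fin m) → ℝ)
    (g : ℝ → EuclideanSpace ℝ (Fin n) →
      (EuclideanSpace ℝ (Fin m) →L[ℝ] EuclideanSpace ℝ (Fin n)))
    (t' t'' : ℝ) (ht : t' < t'')
    (x : ℝ → EuclideanSpace ℝ (Fin n)) (u : ℝ → EuclideanSpace ℝ (Fin m))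
    (m₀ : ℝ) (hm₀ : 0 < m₀)
    (hLpos : ∀ t ∈ Set.Icc t' t'', m₀ ≤ L t (x t) (u t))
    (hLint : IntervalIntegrable (fun t => L t (x t) (u t)) MeasureTheory.volume t' t'')
    (hgint : IntervalIntegrable (fun t => g t (x t) (u t)) MeasureTheory.volume t' t'')
    (hxode : ∀ t ∈ Set.Icc t' t'',
      x t = x t' + ∫ s in t'..t, g s (x s) (u s)) :
    StrictMonoOn (fun t => ∫ s in t'..t, L s (x s) (u s)) (Set.Icc t' t'') ∧
    ∃ (T : ℝ) (tfun : ℝ → ℝ),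
      T = (∫ t in t'..t'', L t (x t) (u t)) ∧
      (∀ t ∈ Set.Icc t' t'', tfun (∫ s in t'..t, L s (x s) (u s)) = t) ∧
      (∀ τ ∈ Set.Icc (0:ℝ) T, (∫ s in t'..(tfun τ), L s (x s) (u s)) = τ) ∧
      (∀ τ ∈ Set.Icc (0:ℝ) T,
        tfun τ = t' + ∫ s in (0:ℝ)..τ, 1 / L (tfun s) (x (tfun s)) (u (tfun s))) ∧
      (∀ τ ∈ Set.Icc (0:ℝ) T,
        x (tfun τ) = x t' + ∫ s in (0:ℝ)..τ,
          (1 / L (tfun s) (x (tfun s)) (u (tfun s))) •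
            g (tfun s) (x (tfun s)) (u (tfun s))) := by
  set f : ℝ → ℝ := fun t => L t (x t) (u t) with hfdef
  set G : ℝ → EuclideanSpace ℝ (Fin n) := fun t => g t (x t) (u t) with hGdef
  set F : ℝ → ℝ := fun t => ∫ s in t'..t, f s with hFdef
  -- integrability on Icc
  have hfint : IntegrableOn f (Set.Icc t' t'') MeasureTheory.volume :=
    hLint.1.congr_set_ae (Ioc_ae_eq_Icc (μ := MeasureTheory.volume)).symm
  have hintCD : ∀ c ∈ Set.Icc t' t'', ∀ d ∈ Set.Icc t' t'',
      IntervalIntegrable f MeasureTheory.volume c d := by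
    intro c hc d hd
    refine hLint.mono_set (Set.uIcc_subset_uIcc ?_ ?_) <;>
      · rw [Set.uIcc_of_le ht.le]; assumption
  have hFdiff : ∀ c ∈ Set.Icc t' t'', ∀ d ∈ Set.Icc t' t'',
      F d - F c = ∫ s in c..d, f s := by
    intro c hc d hd
    exact integral_interval_sub_left (hintCD t' ⟨le_rfl, ht.le⟩ d hd)
      (hintCD t' ⟨le_rfl, ht.le⟩ c hc)
  have hlow : ∀ c ∈ Set.Icc t' t'', ∀ d ∈ Set.Icc t' t'', c ≤ d →
      m₀ * (d - c) ≤ ∫ s in c..d, f s := by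
    intro c hc d hd hcd
    have h1 : ∫ s in c..d, m₀ ≤ ∫ s in c..d, f s := by
      refine integral_mono_on hcd intervalIntegrable_const (hintCD c hc d hd) ?_
      intro t htmem
      exact hLpos t ⟨le_trans hc.1 htmem.1, le_trans htmem.2 hd.2⟩
    rw [intervalIntegral.integral_const, smul_eq_mul] at h1
    linarith
  have strictF : StrictMonoOn F (Set.Icc t' t'') := by
    intro c hc d hd hcd
    have h1 := hFdiff c hc d hd
    have h2 := hlow c hc d hd hcd.le
    have h3 : 0 < m₀ * (d - c) := mul_pos hm₀ (by linarith)
    linarith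
  have Fmono : MonotoneOn F (Set.Icc t' t'') := strictF.monotoneOn
  have hF0 : F t' = 0 := integral_same
  set T : ℝ := F t'' with hTdef
  have htmem : t' ∈ Set.Icc t' t'' := ⟨le_rfl, ht.le⟩
  have htmem' : t'' ∈ Set.Icc t' t'' := ⟨ht.le, le_rfl⟩
  have hT0 : 0 < T := by
    have := strictF htmem htmem' ht
    rwa [hF0] at this
  have hFmem : ∀ t ∈ Set.Icc t' t'', F t ∈ Set.Icc (0:ℝ) T := by
    intro t htm
    constructor
    · have := Fmono htmem htm htm.1
      rwa [hF0] at this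
    · exact Fmono htm htmem' htm.2
  have Fcont : ContinuousOn F (Set.Icc t' t'') := by
    have h := intervalIntegral.continuousOn_primitive_interval
      (a := t') (b := t'') (f := f) (μ := MeasureTheory.volume)
      (by rwa [Set.uIcc_of_le ht.le])
    rwa [Set.uIcc_of_le ht.le] at h
  have hsurj : ∀ τ ∈ Set.Icc (0:ℝ) T, ∃ t ∈ Set.Icc t' t'', F t = τ := by
    intro τ hτ
    have h := intermediate_value_Icc ht.le Fcont
    rw [hF0] at h
    obtain ⟨t, htm, hFt⟩ := h hτ
    exact ⟨t, htm, hFt⟩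
  set tfun : ℝ → ℝ :=
    fun τ => Function.invFunOn F (Set.Icc t' t'') (max 0 (min τ T)) with htfundef
  have htfun_mem_eq : ∀ τ ∈ Set.Icc (0:ℝ) T,
      tfun τ ∈ Set.Icc t' t'' ∧ F (tfun τ) = τ := by
    intro τ hτ
    have hclamp : max 0 (min τ T) = τ := by
      rw [min_eq_left hτ.2, max_eq_right hτ.1]
    have hex : ∃ t ∈ Set.Icc t' t'', F t = τ := hsurj τ hτ
    rw [htfundef]
    simp only [hclamp]
    exact ⟨Function.invFunOn_mem hex, Function.invFunOn_eq hex⟩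
  have htfun_left : ∀ t ∈ Set.Icc t' t'', tfun (F t) = t := by
    intro t htm
    have hclamp : max 0 (min (F t) T) = F t := by
      rw [min_eq_left (hFmem t htm).2, max_eq_right (hFmem t htm).1]
    rw [htfundef]
    simp only [hclamp]
    exact strictF.injOn.leftInvOn_invFunOn htm
  -- the global extension Φ
  set Φ : ℝ → ℝ :=
    fun t => F (max t' (min t t'')) + max (t - t'') 0 + min (t - t') 0 with hΦdef
  have hclamp_mem : ∀ t : ℝ, max t' (min t t'') ∈ Set.Icc t' t'' :=
    fun t => ⟨le_max_left _ _, max_le ht.le (min_le_right _ _)⟩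
  have hΦF : ∀ t ∈ Set.Icc t' t'', Φ t = F t := by
    intro t htm
    rw [hΦdef]
    simp only
    rw [min_eq_left htm.2, max_eq_right htm.1,
      max_eq_right (by linarith [htm.2] : t - t'' ≤ 0),
      min_eq_right (by linarith [htm.1] : (0:ℝ) ≤ t - t')]
    ring
  have hΦcont : Continuous Φ := by
    have h1 : Continuous fun t : ℝ => max t' (min t t'') :=
      continuous_const.max (continuous_id.min continuous_const)
    exact ((Fcont.comp_continuous h1 hclamp_mem).add
      ((continuous_id.sub continuous_const).max continuous_const)).add
      ((continuous_id.sub continuous_const).min continuous_const)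
  have hclampmono : Monotone fun t : ℝ => max t' (min t t'') :=
    fun s t h => max_le_max le_rfl (min_le_min (by exact h) le_rfl)
  have hm1 : Monotone fun t : ℝ => max (t - t'') 0 :=
    fun s t h => max_le_max (by linarith) le_rfl
  have hm2 : Monotone fun t : ℝ => min (t - t') 0 :=
    fun s t h => min_le_min (by linarith) le_rfl
  have hΦstrict : StrictMono Φ := by
    intro t1 t2 h12
    have hFC : F (max t' (min t1 t'')) ≤ F (max t' (min t2 t'')) :=
      Fmono (hclamp_mem t1) (hclamp_mem t2) (hclampmono h12.le)
    rcases le_or_gt t2 t' with h2 | h2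
    · have e1 : min (t1 - t') 0 = t1 - t' := min_eq_left (by linarith)
      have e2 : min (t2 - t') 0 = t2 - t' := min_eq_left (by linarith)
      have e3 : max (t1 - t'') 0 ≤ max (t2 - t'') 0 := hm1 h12.le
      have hc1 : max t' (min t1 t'') = t' := by
        rw [min_eq_left (by linarith : t1 ≤ t''), max_eq_left (by linarith : t1 ≤ t')]
      have hc2 : max t' (min t2 t'') = t' := by
        rw [min_eq_left (by linarith : t2 ≤ t''), max_eq_left (by linarith : t2 ≤ t')]
      simp only [hΦdef]
      rw [e1, e2, hc1, hc2]
      linarith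
    · rcases le_or_gt t'' t1 with h1 | h1
      · have e1 : max (t1 - t'') 0 = t1 - t'' := max_eq_left (by linarith)
        have e2 : max (t2 - t'') 0 = t2 - t'' := max_eq_left (by linarith)
        have e3 : min (t1 - t') 0 ≤ min (t2 - t') 0 := hm2 h12.le
        have heqF : F (max t' (min t1 t'')) = F (max t' (min t2 t'')) := by
          rw [min_eq_right h1, min_eq_right (by linarith : t'' ≤ t2)]
        simp only [hΦdef]
        rw [e1, e2]
        linarith
      · have hc1 : max t' (min t1 t'') = max t' t1 := by rw [min_eq_left h1.le]
        have hc2 : max t' (min t2 t'') = min t2 t'' := by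
          rw [max_eq_right (le_min h2.le ht.le)]
        have hlt : max t' t1 < min t2 t'' := by
          rw [max_lt_iff, lt_min_iff, lt_min_iff]
          exact ⟨⟨h2, ht⟩, h12, h1⟩
        have hFs : F (max t' (min t1 t'')) < F (max t' (min t2 t'')) := by
          rw [hc1, hc2]
          exact strictF (by rw [← hc1]; exact hclamp_mem t1)
            (by rw [← hc2]; exact hclamp_mem t2) hlt
        have e3 : max (t1 - t'') 0 ≤ max (t2 - t'') 0 := hm1 h12.le
        have e4 : min (t1 - t') 0 ≤ min (t2 - t') 0 := hm2 h12.le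
        simp only [hΦdef]
        linarith
  have hΦemb : MeasurableEmbedding Φ :=
    hΦcont.measurableEmbedding hΦstrict.injective
  -- measurable representative of the density
  have hfaesm : AEStronglyMeasurable f (MeasureTheory.volume.restrict (Set.Icc t' t'')) :=
    hfint.aestronglyMeasurable
  set f₀ : ℝ → ℝ := hfaesm.mk f with hf₀def
  have hf₀meas : StronglyMeasurable f₀ := hfaesm.stronglyMeasurable_mk
  have hff₀ : f =ᵐ[MeasureTheory.volume.restrict (Set.Icc t' t'')] f₀ := hfaesm.ae_eq_mk
  set ℓ : ℝ → ℝ≥0 := fun t => Real.toNNReal (f₀ t) with hℓdef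
  have hℓmeas : Measurable ℓ := hf₀meas.measurable.real_toNNReal
  -- key computation A
  have hA : ∀ d ∈ Set.Icc t' t'',
      ∫⁻ r in Set.Icc t' d, (ℓ r : ℝ≥0∞) = ENNReal.ofReal (F d) := by
    intro d hd
    have hsub : Set.Icc t' d ⊆ Set.Icc t' t'' := Set.Icc_subset_Icc le_rfl hd.2
    have hae : f =ᵐ[MeasureTheory.volume.restrict (Set.Icc t' d)] f₀ :=
      ae_restrict_of_ae_restrict_of_subset hsub hff₀
    have h1 : ∫⁻ r in Set.Icc t' d, (ℓ r : ℝ≥0∞)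
        = ∫⁻ r in Set.Icc t' d, ENNReal.ofReal (f r) := by
      refine lintegral_congr_ae ?_
      filter_upwards [hae] with r hr
      rw [hr]
      rfl
    have h2 : ENNReal.ofReal (∫ r in Set.Icc t' d, f r)
        = ∫⁻ r in Set.Icc t' d, ENNReal.ofReal (f r) := by
      refine ofReal_integral_eq_lintegral_ofReal (hfint.mono_set hsub) ?_
      refine (ae_restrict_iff' measurableSet_Icc).2 (Filter.Eventually.of_forall ?_)
      intro r hr
      exact le_trans hm₀.le (hLpos r (hsub hr))
    have h3 : ∫ r in Set.Icc t' d, f r = F d := by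
      rw [hFdef]
      simp only
      rw [intervalIntegral.integral_of_le hd.1, integral_Icc_eq_integral_Ioc]
    rw [h1, ← h2, h3]
  -- the pushforward measure identity
  have hmap : ∀ τ ∈ Set.Icc (0:ℝ) T,
      Measure.map Φ ((MeasureTheory.volume.restrict (Set.Icc t' (tfun τ))).withDensity
        (fun r => (ℓ r : ℝ≥0∞))) = MeasureTheory.volume.restrict (Set.Icc (0:ℝ) τ) :=
    fun τ hτ => map_aux t' t'' T τ F Φ tfun ℓ strictF hA hΦcont.measurable hΦF hF0
      htfun_mem_eq hτ
  -- change of variables, specialized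
  have hcongr : ∀ τ ∈ Set.Icc (0:ℝ) T,
      ∀ᵐ r ∂(MeasureTheory.volume), r ∈ Set.Icc t' (tfun τ) →
        ((ℓ r : ℝ) = f r ∧ Φ r = F r ∧ tfun (F r) = r ∧ m₀ ≤ f r) := by
    intro τ hτ
    have hsub : Set.Icc t' (tfun τ) ⊆ Set.Icc t' t'' :=
      Set.Icc_subset_Icc le_rfl (htfun_mem_eq τ hτ).1.2
    have hae : f =ᵐ[MeasureTheory.volume.restrict (Set.Icc t' (tfun τ))] f₀ :=
      ae_restrict_of_ae_restrict_of_subset hsub hff₀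
    have hae' := (ae_restrict_iff' measurableSet_Icc).1 hae
    filter_upwards [hae'] with r hr hrmem
    have hrab : r ∈ Set.Icc t' t'' := hsub hrmem
    have hfr : m₀ ≤ f r := hLpos r hrab
    refine ⟨?_, hΦF r hrab, htfun_left r hrab, hfr⟩
    rw [hℓdef]
    simp only [Real.coe_toNNReal', ← hr hrmem]
    exact max_eq_left (le_trans hm₀.le hfr)
  refine ⟨strictF, T, tfun, rfl, ?_, ?_, ?_, ?_⟩
  · intro t htm
    exact htfun_left t htm
  · intro τ hτ
    exact (htfun_mem_eq τ hτ).2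
  · -- dt/dτ = 1/L in integral form
    intro τ hτ
    have hc_mem := (htfun_mem_eq τ hτ).1
    have key : (∫ s in (0:ℝ)..τ, 1 / f (tfun s)) = (tfun τ) - t' := by
      rw [intervalIntegral.integral_of_le hτ.1, ← integral_Icc_eq_integral_Ioc,
        cov_aux Φ hΦemb ℓ hℓmeas t' (tfun τ) τ (hmap τ hτ) (fun s => 1 / f (tfun s))]
      have : ∫ r in Set.Icc t' (tfun τ), (ℓ r : ℝ) • (1 / f (tfun (Φ r)))
          = ∫ r in Set.Icc t' (tfun τ), (1:ℝ) := by
        refine setIntegral_congr_ae measurableSet_Icc ?_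
        filter_upwards [hcongr τ hτ] with r hr hrmem
        obtain ⟨h1, h2, h3, h4⟩ := hr hrmem
        rw [h1, h2, h3, smul_eq_mul, mul_one_div, div_self (by linarith)]
      rw [this]
      rw [setIntegral_const, Real.volume_real_Icc, smul_eq_mul, mul_one,
        max_eq_left (by linarith [hc_mem.1] : (0:ℝ) ≤ tfun τ - t')]
    rw [key]
    ring
  · -- dy/dτ = g w / L in integral form
    intro τ hτ
    have hc_mem := (htfun_mem_eq τ hτ).1
    have key : (∫ s in (0:ℝ)..τ, (1 / f (tfun s)) • G (tfun s))
        = x (tfun τ) - x t' := by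
      rw [intervalIntegral.integral_of_le hτ.1, ← integral_Icc_eq_integral_Ioc,
        cov_aux Φ hΦemb ℓ hℓmeas t' (tfun τ) τ (hmap τ hτ)
          (fun s => (1 / f (tfun s)) • G (tfun s))]
      have h5 : ∫ r in Set.Icc t' (tfun τ), (ℓ r : ℝ) • ((1 / f (tfun (Φ r))) • G (tfun (Φ r)))
          = ∫ r in Set.Icc t' (tfun τ), G r := by
        refine setIntegral_congr_ae measurableSet_Icc ?_
        filter_upwards [hcongr τ hτ] with r hr hrmem
        obtain ⟨h1, h2, h3, h4⟩ := hr hrmem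
        rw [h1, h2, h3, smul_smul, mul_one_div, div_self (by linarith), one_smul]
      rw [h5, integral_Icc_eq_integral_Ioc, ← intervalIntegral.integral_of_le hc_mem.1]
      have := hxode (tfun τ) hc_mem
      rw [hGdef]
      simp only
      rw [this]
      abel
    rw [key]
    abel
end

section
/- For each fixed (t,y), the set G(t,y) = { (ρ/(L(t,y,w)+β), ρ·g(t,y)w/(L(t,y,w)+β)) : w ∈ ℝᵐ, ρ ∈ [0,1] } ⊂ ℝ × ℝⁿ is convex, provided L(t,y,·) is convex in w. -/
/-- Lemma 2 (convexity part): for fixed `(t,y)`, if `L(t,y,·)` is convex and positive, the set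
`G(t,y) = { (ρ/(L(w)+β), ρ·g(t,y)w/(L(w)+β)) : w ∈ ℝᵐ, ρ ∈ [0,1] }` is convex. -/
theorem stmt5 {n m : ℕ}
    (L : EuclideanSpace ℝ (Fin m) → ℝ)
    (g : EuclideanSpace ℝ (Fin m) →ₗ[ℝ] EuclideanSpace ℝ (Fin n))
    (β : ℝ) (hβ : 0 < β)
    (hLconv : ConvexOn ℝ Set.univ L)
    (hLpos : ∀ w, 0 < L w) :
    Convex ℝ { p : ℝ × EuclideanSpace ℝ (Fin n) |
      ∃ (w : EuclideanSpace ℝ (Fin m)) (ρ : ℝ), ρ ∈ Set.Icc (0:ℝ) 1 ∧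
        p = (ρ / (L w + β), (ρ / (L w + β)) • g w) } := by
  rintro p ⟨w₁, ρ₁, ⟨hρ₁0, hρ₁1⟩, rfl⟩ q ⟨w₂, ρ₂, ⟨hρ₂0, hρ₂1⟩, rfl⟩ a b ha hb hab
  have hd₁ : 0 < L w₁ + β := by linarith [hLpos w₁]
  have hd₂ : 0 < L w₂ + β := by linarith [hLpos w₂]
  set l₁ := ρ₁ / (L w₁ + β) with hl₁
  set l₂ := ρ₂ / (L w₂ + β) with hl₂
  have hl₁0 : 0 ≤ l₁ := div_nonneg hρ₁0 hd₁.le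
  have hl₂0 : 0 ≤ l₂ := div_nonneg hρ₂0 hd₂.le
  have hl₁r : l₁ * (L w₁ + β) = ρ₁ := div_mul_cancel₀ _ hd₁.ne'
  have hl₂r : l₂ * (L w₂ + β) = ρ₂ := div_mul_cancel₀ _ hd₂.ne'
  set s := a * l₁ + b * l₂ with hs
  have hs0 : 0 ≤ s := by positivity
  -- the combination point has components (s, (a*l₁) • g w₁ + (b*l₂) • g w₂)
  have hcomb : a • ((l₁ : ℝ), l₁ • g w₁) + b • ((l₂ : ℝ), l₂ • g w₂)
      = ((s : ℝ), (a * l₁) • g w₁ + (b * l₂) • g w₂) := by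
    simp [Prod.ext_iff, hs, smul_smul]
  rw [hcomb]
  rcases eq_or_lt_of_le hs0 with hsz | hsp
  · -- s = 0, hence a*l₁ = 0 and b*l₂ = 0
    have h1 : a * l₁ = 0 := by nlinarith
    have h2 : b * l₂ = 0 := by nlinarith
    refine ⟨0, 0, ⟨le_refl 0, zero_le_one⟩, ?_⟩
    simp [Prod.ext_iff, ← hsz, h1, h2]
  · set w := s⁻¹ • ((a * l₁) • w₁ + (b * l₂) • w₂) with hw
    have hdw : 0 < L w + β := by linarith [hLpos w]
    refine ⟨w, s * (L w + β), ⟨by positivity, ?_⟩, ?_⟩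
    · -- upper bound via convexity
      have hwc : w = (a * l₁ / s) • w₁ + (b * l₂ / s) • w₂ := by
        rw [hw, smul_add, smul_smul, smul_smul, div_eq_inv_mul, div_eq_inv_mul]
      have hsum : a * l₁ / s + b * l₂ / s = 1 := by
        field_simp
        exact hs.symm
      have hconv := hLconv.2 (Set.mem_univ w₁) (Set.mem_univ w₂)
        (div_nonneg (by positivity) hs0) (div_nonneg (by positivity) hs0) hsum
      rw [← hwc] at hconv
      have hLw : s * L w ≤ a * l₁ * L w₁ + b * l₂ * L w₂ := by
        have := mul_le_mul_of_nonneg_left hconv hs0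
        calc s * L w ≤ s * (a * l₁ / s * L w₁ + b * l₂ / s * L w₂) := this
          _ = a * l₁ * L w₁ + b * l₂ * L w₂ := by field_simp
      have h1 : a * l₁ * (L w₁ + β) = a * ρ₁ := by rw [mul_assoc, hl₁r]
      have h2 : b * l₂ * (L w₂ + β) = b * ρ₂ := by rw [mul_assoc, hl₂r]
      nlinarith [mul_le_mul_of_nonneg_left hρ₁1 ha, mul_le_mul_of_nonneg_left hρ₂1 hb]
    · -- the point equality
      have hcd : s * (L w + β) / (L w + β) = s := by
        field_simp
      rw [hcd]
      refine Prod.ext rfl ?_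
      simp only [hw, map_smul, map_add, smul_smul, smul_add]
      simp [← mul_assoc, mul_inv_cancel₀ hsp.ne']
end

section
/- For each fixed (t,y), the set G(t,y) = { (ρ/(L(t,y,w)+β), ρ·g(t,y)w/(L(t,y,w)+β)) : w ∈ ℝᵐ, ρ ∈ [0,1] } is compact (closed and bounded), given that L(t,y,w) ≥ θ(|w|) > 0 with r/θ(r) → 0 as r → ∞ and |g(t,y)| ≤ c_g. -/
open Filter

/-- Lemma 2 (compactness part): for fixed `(t,y)`, the set
`G(t,y) = { (ρ/(L(w)+β), ρ·g(t,y)w/(L(w)+β)) : w ∈ ℝᵐ, ρ ∈ [0,1] }` is compact, given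
`L(w) ≥ θ(|w|) > 0` with `r/θ(r) → 0` as `r → ∞`, `L` continuous and `‖g‖ ≤ c_g`. -/
theorem stmt6 {n m : ℕ}
    (L : EuclideanSpace ℝ (Fin m) → ℝ) (hLcont : Continuous L)
    (θ : ℝ → ℝ)
    (hθ : ∀ w : EuclideanSpace ℝ (Fin m), θ ‖w‖ ≤ L w ∧ 0 < θ ‖w‖)
    (hθlim : Tendsto (fun r => r / θ r) atTop (nhds 0))
    (β : ℝ) (hβ : 0 < β)
    (g : EuclideanSpace ℝ (Fin m) →L[ℝ] EuclideanSpace ℝ (Fin n))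
    (cg : ℝ) (hg : ‖g‖ ≤ cg) :
    IsCompact { p : ℝ × EuclideanSpace ℝ (Fin n) |
      ∃ (w : EuclideanSpace ℝ (Fin m)) (ρ : ℝ), ρ ∈ Set.Icc (0:ℝ) 1 ∧
        p = (ρ / (L w + β), (ρ / (L w + β)) • g w) } := by
  set S := { p : ℝ × EuclideanSpace ℝ (Fin n) |
      ∃ (w : EuclideanSpace ℝ (Fin m)) (ρ : ℝ), ρ ∈ Set.Icc (0:ℝ) 1 ∧
        p = (ρ / (L w + β), (ρ / (L w + β)) • g w) } with hS
  have hcg : (0:ℝ) ≤ cg := le_trans (norm_nonneg g) hg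
  have hLpos : ∀ w, 0 < L w + β := fun w => by
    have h1 := (hθ w).1; have h2 := (hθ w).2; linarith
  -- choose R ≥ 0 with r/θ r < 1 for r ≥ R
  obtain ⟨R₀, hR₀⟩ := (eventually_atTop).1 (hθlim.eventually_lt_const one_pos)
  set R := max R₀ 0 with hRdef
  have hR : ∀ w : EuclideanSpace ℝ (Fin m), R ≤ ‖w‖ → ‖w‖ < θ ‖w‖ := by
    intro w hw
    have h := hR₀ ‖w‖ (le_trans (le_max_left _ _) hw)
    exact (div_lt_one (hθ w).2).1 h
  -- key norm bound for the second coordinate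
  have hbound2 : ∀ (w : EuclideanSpace ℝ (Fin m)) (ρ : ℝ), ρ ∈ Set.Icc (0:ℝ) 1 →
      ‖(ρ / (L w + β)) • g w‖ ≤ cg * R / β + cg := by
    intro w ρ hρ
    have hpos := hLpos w
    have h1 : ‖(ρ / (L w + β)) • g w‖ = (ρ / (L w + β)) * ‖g w‖ := by
      rw [norm_smul, Real.norm_eq_abs, abs_of_nonneg (div_nonneg hρ.1 hpos.le)]
    have hgw : ‖g w‖ ≤ cg * ‖w‖ :=
      le_trans (g.le_opNorm w) (mul_le_mul_of_nonneg_right hg (norm_nonneg w))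
    rcases le_or_gt ‖w‖ R with hwR | hwR
    · have h2 : (ρ / (L w + β)) * ‖g w‖ ≤ (1 / β) * (cg * R) := by
        apply mul_le_mul
        · exact div_le_div₀ zero_le_one hρ.2 hβ (by linarith [(hθ w).1, (hθ w).2])
        · exact le_trans hgw (mul_le_mul_of_nonneg_left hwR hcg)
        · exact norm_nonneg _
        · positivity
      rw [h1]
      calc (ρ / (L w + β)) * ‖g w‖ ≤ (1 / β) * (cg * R) := h2
        _ = cg * R / β := by ring
        _ ≤ cg * R / β + cg := by linarith
    · have hwθ : ‖w‖ < θ ‖w‖ := hR w hwR.le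
      have hw0 : 0 < ‖w‖ := lt_of_le_of_lt (le_max_right _ _) hwR
      have h2 : (ρ / (L w + β)) * ‖g w‖ ≤ (1 / ‖w‖) * (cg * ‖w‖) := by
        apply mul_le_mul
        · exact div_le_div₀ zero_le_one hρ.2 hw0 (by linarith [(hθ w).1])
        · exact hgw
        · exact norm_nonneg _
        · positivity
      rw [h1]
      calc (ρ / (L w + β)) * ‖g w‖ ≤ (1 / ‖w‖) * (cg * ‖w‖) := h2
        _ = cg := by field_simp
        _ ≤ cg * R / β + cg := by
            have hR0 : (0:ℝ) ≤ R := le_max_right _ _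
            have : 0 ≤ cg * R / β := div_nonneg (mul_nonneg hcg hR0) hβ.le
            linarith
  apply Metric.isCompact_of_isClosed_isBounded
  · -- closedness
    apply IsSeqClosed.isClosed
    intro x p hxS hxp
    choose w ρ hρ hx using hxS
    by_cases hb : ∃ C, ∃ᶠ k in atTop, ‖w k‖ ≤ C
    · -- bounded subsequence
      obtain ⟨C, hC⟩ := hb
      obtain ⟨φ, hφ, hφC⟩ := Filter.extraction_of_frequently_atTop hC
      have hcpt : IsCompact ((Metric.closedBall (0:EuclideanSpace ℝ (Fin m)) C) ×ˢ
          Set.Icc (0:ℝ) 1) :=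
        (isCompact_closedBall _ _).prod isCompact_Icc
      have hmem : ∀ k, ((w (φ k)), (ρ (φ k))) ∈
          (Metric.closedBall (0:EuclideanSpace ℝ (Fin m)) C) ×ˢ Set.Icc (0:ℝ) 1 := by
        intro k
        exact ⟨by simpa [Metric.mem_closedBall, dist_zero_right] using hφC k, hρ (φ k)⟩
      obtain ⟨⟨w₀, ρ₀⟩, hq, ψ, hψ, hlim⟩ := hcpt.tendsto_subseq hmem
      -- f is continuous
      have hfcont : Continuous (fun q : EuclideanSpace ℝ (Fin m) × ℝ =>
          ((q.2 / (L q.1 + β), (q.2 / (L q.1 + β)) • g q.1) :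
            ℝ × EuclideanSpace ℝ (Fin n))) := by
        have hdiv : Continuous (fun q : EuclideanSpace ℝ (Fin m) × ℝ =>
            q.2 / (L q.1 + β)) :=
          Continuous.div continuous_snd ((hLcont.comp continuous_fst).add continuous_const)
            (fun q => (hLpos q.1).ne')
        exact hdiv.prodMk (hdiv.smul (g.continuous.comp continuous_fst))
      have h1 : Tendsto (fun k => x (φ (ψ k))) atTop
          (nhds (ρ₀ / (L w₀ + β), (ρ₀ / (L w₀ + β)) • g w₀)) := by
        have h := (hfcont.tendsto (w₀, ρ₀)).comp hlim
        refine h.congr fun k => ?_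
        simp only [Function.comp_apply]
        exact (hx (φ (ψ k))).symm
      have h2 : Tendsto (fun k => x (φ (ψ k))) atTop (nhds p) :=
        hxp.comp ((hφ.comp hψ).tendsto_atTop)
      have hp : p = (ρ₀ / (L w₀ + β), (ρ₀ / (L w₀ + β)) • g w₀) :=
        tendsto_nhds_unique h2 h1
      exact ⟨w₀, ρ₀, hq.2, hp⟩
    · -- ‖w k‖ → ∞, so x k → (0,0)
      push_neg at hb
      have hb' : ∀ C : ℝ, ∀ᶠ k in atTop, C < ‖w k‖ := by
        intro C
        have := hb C
        simpa [not_le] using this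
      have hwtop : Tendsto (fun k => ‖w k‖) atTop atTop :=
        tendsto_atTop.2 fun C => ((hb' C).mono fun k hk => hk.le)
      have hθw : ∀ᶠ k in atTop, ‖w k‖ < θ ‖w k‖ :=
        ((hb' R).mono fun k hk => hR (w k) hk.le)
      have hθtop : Tendsto (fun k => θ ‖w k‖) atTop atTop :=
        tendsto_atTop_mono' atTop (hθw.mono fun k hk => hk.le) hwtop
      have hfrac : Tendsto (fun k => ‖w k‖ / θ ‖w k‖) atTop (nhds 0) :=
        hθlim.comp hwtop
      -- first coordinate tends to 0
      have h1 : Tendsto (fun k => ρ k / (L (w k) + β)) atTop (nhds 0) := by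
        have hbd : ∀ᶠ k in atTop, ‖ρ k / (L (w k) + β)‖ ≤ (θ ‖w k‖)⁻¹ := by
          filter_upwards [eventually_ge_atTop 0] with k _
          have hpos := hLpos (w k)
          have hθpos := (hθ (w k)).2
          rw [Real.norm_eq_abs, abs_of_nonneg (div_nonneg (hρ k).1 hpos.le)]
          rw [← one_div]
          exact div_le_div₀ zero_le_one (hρ k).2 hθpos (by linarith [(hθ (w k)).1])
        exact squeeze_zero_norm' hbd hθtop.inv_tendsto_atTop
      -- second coordinate tends to 0
      have h2 : Tendsto (fun k => (ρ k / (L (w k) + β)) • g (w k)) atTop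
          (nhds (0 : EuclideanSpace ℝ (Fin n))) := by
        have hbd : ∀ᶠ k in atTop, ‖(ρ k / (L (w k) + β)) • g (w k)‖ ≤
            cg * (‖w k‖ / θ ‖w k‖) := by
          filter_upwards [hb' 0] with k hk
          have hpos := hLpos (w k)
          have hθpos := (hθ (w k)).2
          have hgw : ‖g (w k)‖ ≤ cg * ‖w k‖ :=
            le_trans (g.le_opNorm _) (mul_le_mul_of_nonneg_right hg (norm_nonneg _))
          rw [norm_smul, Real.norm_eq_abs, abs_of_nonneg (div_nonneg (hρ k).1 hpos.le)]
          calc (ρ k / (L (w k) + β)) * ‖g (w k)‖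
              ≤ (1 / θ ‖w k‖) * (cg * ‖w k‖) := by
                apply mul_le_mul
                · exact div_le_div₀ zero_le_one (hρ k).2 hθpos (by linarith [(hθ (w k)).1])
                · exact hgw
                · exact norm_nonneg _
                · positivity
            _ = cg * (‖w k‖ / θ ‖w k‖) := by ring
        exact squeeze_zero_norm' hbd (by simpa using hfrac.const_mul cg)
      have hx0 : Tendsto x atTop (nhds ((0:ℝ), (0:EuclideanSpace ℝ (Fin n)))) := by
        have := h1.prodMk_nhds h2
        apply this.congr
        intro k; rw [hx k]
      have hp : p = ((0:ℝ), (0:EuclideanSpace ℝ (Fin n))) :=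
        tendsto_nhds_unique hxp hx0
      refine ⟨0, 0, ⟨le_refl 0, zero_le_one⟩, ?_⟩
      rw [hp]; simp
  · -- boundedness
    rw [Metric.isBounded_iff_subset_closedBall (0 : ℝ × EuclideanSpace ℝ (Fin n))]
    refine ⟨max (1/β) (cg * R / β + cg), ?_⟩
    rintro ⟨a, v⟩ ⟨w, ρ, hρ, hp⟩
    rw [Metric.mem_closedBall, dist_zero_right]
    have hp1 : a = ρ / (L w + β) := congrArg Prod.fst hp
    have hp2 : v = (ρ / (L w + β)) • g w := congrArg Prod.snd hp
    rw [Prod.norm_def]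
    apply max_le
    · rw [hp1, Real.norm_eq_abs, abs_of_nonneg (div_nonneg hρ.1 (hLpos w).le)]
      refine le_trans ?_ (le_max_left _ _)
      exact div_le_div₀ zero_le_one hρ.2 hβ (by linarith [(hθ w).1, (hθ w).2])
    · rw [hp2]
      exact le_trans (hbound2 w ρ hρ) (le_max_right _ _)
end

section
/- Under μ-strong convexity of L in u, suppose at some τ the maximum-principle relation ⟨g(ŷ)ŵ, p⟩·(L̂+β) = (q + ⟨g(ŷ)ŵ, p⟩)·⟨∇_w L̂, ŵ⟩ holds with q > 0 and ⟨p, g(ŷ)ŵ⟩ > 0. Then ⟨∇_w L̂, ŵ⟩ ≤ L̂ + β, and hence (μ/2)|ŵ|² ≤ Λ₀ − L̂ + ⟨∇_w L̂, ŵ⟩ ≤ Λ₀ + β, so |ŵ| ≤ √((2/μ)(Λ₀+β)). -/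
open RealInnerProductSpace

/-- First bound in the proof of Theorem 1: under μ-strong convexity of `L` in `w`, if the
maximum-principle identity `(L̂+β)⟨gŵ,p⟩ = (q+⟨gŵ,p⟩)⟨gradL(ŵ),ŵ⟩` holds with `q > 0` and
`⟨p,gŵ⟩ > 0`, then `⟨gradL(ŵ),ŵ⟩ ≤ L̂+β`, hence `(μ/2)|ŵ|² ≤ Λ₀+β` and
`|ŵ| ≤ √((2/μ)(Λ₀+β))`. -/
theorem stmt12 {n m : ℕ}
    (L : EuclideanSpace ℝ (Fin m) → ℝ)
    (gradL : EuclideanSpace ℝ (Fin m) → EuclideanSpace ℝ (Fin m))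
    (μ : ℝ) (hμ : 0 < μ)
    (hconv : ∀ u v : EuclideanSpace ℝ (Fin m),
      L u + ⟪gradL u, v - u⟫ + μ / 2 * ‖v - u‖ ^ 2 ≤ L v)
    (Λ₀ : ℝ) (hΛ₀ : L 0 ≤ Λ₀)
    (β : ℝ) (hβ : 0 < β)
    (p gw : EuclideanSpace ℝ (Fin n)) (what : EuclideanSpace ℝ (Fin m)) (q : ℝ)
    (hq : 0 < q) (hLβ : 0 < L what + β)
    (hgwp : 0 < ⟪p, gw⟫)
    (hmax : (L what + β) * ⟪gw, p⟫ = (q + ⟪gw, p⟫) * ⟪gradL what, what⟫) :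
    ⟪gradL what, what⟫ ≤ L what + β ∧
    μ / 2 * ‖what‖ ^ 2 ≤ Λ₀ + β ∧
    ‖what‖ ≤ Real.sqrt (2 / μ * (Λ₀ + β)) := by
  have hsym : ⟪gw, p⟫ = ⟪p, gw⟫ := real_inner_comm _ _
  set s := ⟪gw, p⟫ with hs
  have hs0 : 0 < s := hsym ▸ hgwp
  set D := ⟪gradL what, what⟫ with hD
  have hqs : 0 < q + s := by linarith
  have h1 : D ≤ L what + β := by
    have : (q + s) * D ≤ (q + s) * (L what + β) := by
      rw [← hmax]
      nlinarith
    exact le_of_mul_le_mul_left this hqs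
  have h2 : μ / 2 * ‖what‖ ^ 2 ≤ Λ₀ + β := by
    have := hconv what 0
    have hn : ‖(0 : EuclideanSpace ℝ (Fin m)) - what‖ = ‖what‖ := by
      simp
    rw [hn] at this
    have hip : ⟪gradL what, (0 : EuclideanSpace ℝ (Fin m)) - what⟫ = -D := by
      simp [hD]
    rw [hip] at this
    linarith
  refine ⟨h1, h2, ?_⟩
  have hsq : ‖what‖ ^ 2 ≤ 2 / μ * (Λ₀ + β) := by
    rw [div_mul_eq_mul_div, le_div_iff₀ hμ]
    nlinarith
  calc ‖what‖ = Real.sqrt (‖what‖ ^ 2) := by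
        rw [Real.sqrt_sq (norm_nonneg _)]
    _ ≤ Real.sqrt (2 / μ * (Λ₀ + β)) := Real.sqrt_le_sqrt hsq
end

section
/- If L is μ-strongly convex in u and ⟨p, g ŵ⟩ ≤ 0 in the maximum-principle identity (L̂+β)⟨g ŵ,p⟩ = (q+⟨g ŵ,p⟩)⟨∇_w L̂, ŵ⟩ with q + ⟨g ŵ,p⟩ > 0, then ⟨∇_w L̂, ŵ⟩ ≤ 0, hence (μ/2)|ŵ|² ≤ Λ₀ − L̂ ≤ Λ₀ + Λ₁|ŵ| − (μ/2)|ŵ|², and therefore |ŵ| ≤ (Λ₁ + √(Λ₁² + 4μΛ₀))/2 (taking μ normalized appropriately, i.e., μ|ŵ|² − Λ₁|ŵ| − Λ₀ ≤ 0). -/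
open RealInnerProductSpace

/-- Second bound in the proof of Theorem 1: under μ-strong convexity of `L` in `w` with
`L(0) ≥ 0`, if `⟨p,gŵ⟩ ≤ 0` in the maximum-principle identity
`(L̂+β)⟨gŵ,p⟩ = (q+⟨gŵ,p⟩)⟨∇L(ŵ),ŵ⟩` with `q+⟨gŵ,p⟩ > 0`, then `⟨∇L(ŵ),ŵ⟩ ≤ 0`, hence
`(μ/2)|ŵ|² ≤ Λ₀ − L̂`, `μ|ŵ|² − Λ₁|ŵ| − Λ₀ ≤ 0`, and
`|ŵ| ≤ (Λ₁ + √(Λ₁² + 4μΛ₀))/(2μ)`. -/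
theorem stmt13 {n m : ℕ}
    (L : EuclideanSpace ℝ (Fin m) → ℝ)
    (gradL : EuclideanSpace ℝ (Fin m) → EuclideanSpace ℝ (Fin m))
    (μ : ℝ) (hμ : 0 < μ)
    (hconv : ∀ u v : EuclideanSpace ℝ (Fin m),
      L u + ⟪gradL u, v - u⟫ + μ / 2 * ‖v - u‖ ^ 2 ≤ L v)
    (hL0 : 0 ≤ L 0)
    (Λ₀ Λ₁ : ℝ) (hΛ₀ : L 0 ≤ Λ₀) (hΛ₁ : ‖gradL 0‖ ≤ Λ₁)
    (β : ℝ) (hβ : 0 < β)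
    (p gw : EuclideanSpace ℝ (Fin n)) (what : EuclideanSpace ℝ (Fin m)) (q : ℝ)
    (hLβ : 0 < L what + β)
    (hgwp : ⟪p, gw⟫ ≤ 0)
    (hpos : 0 < q + ⟪gw, p⟫)
    (hmax : (L what + β) * ⟪gw, p⟫ = (q + ⟪gw, p⟫) * ⟪gradL what, what⟫) :
    ⟪gradL what, what⟫ ≤ 0 ∧
    μ / 2 * ‖what‖ ^ 2 ≤ Λ₀ - L what ∧
    μ * ‖what‖ ^ 2 - Λ₁ * ‖what‖ - Λ₀ ≤ 0 ∧
    ‖what‖ ≤ (Λ₁ + Real.sqrt (Λ₁ ^ 2 + 4 * μ * Λ₀)) / (2 * μ) := by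
  have hsymm : ⟪gw, p⟫ = ⟪p, gw⟫ := real_inner_comm _ _
  have h1 : ⟪gradL what, what⟫ ≤ 0 := by
    have hrhs : (q + ⟪gw, p⟫) * ⟪gradL what, what⟫ ≤ 0 := by
      rw [← hmax]
      exact mul_nonpos_of_nonneg_of_nonpos (le_of_lt hLβ) (hsymm ▸ hgwp)
    nlinarith
  have h2 : μ / 2 * ‖what‖ ^ 2 ≤ Λ₀ - L what := by
    have hc := hconv what 0
    have hn : ‖(0 : EuclideanSpace ℝ (Fin m)) - what‖ = ‖what‖ := by simp
    have hi : ⟪gradL what, (0 : EuclideanSpace ℝ (Fin m)) - what⟫ = -⟪gradL what, what⟫ := by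
      simp [inner_sub_right]
    rw [hn, hi] at hc
    linarith
  have hΛ₁0 : 0 ≤ Λ₁ := le_trans (norm_nonneg _) hΛ₁
  have hΛ₀0 : 0 ≤ Λ₀ := le_trans hL0 hΛ₀
  have hlow : -Λ₁ * ‖what‖ + μ / 2 * ‖what‖ ^ 2 ≤ L what := by
    have hc := hconv 0 what
    have hi : -(Λ₁ * ‖what‖) ≤ ⟪gradL 0, what - 0⟫ := by
      have h4 := abs_real_inner_le_norm (gradL 0) (what - 0)
      have h5 := neg_abs_le ⟪gradL 0, what - 0⟫
      simp only [sub_zero] at h4 h5 ⊢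
      nlinarith [norm_nonneg what]
    simp only [sub_zero] at hc hi
    nlinarith
  have h3 : μ * ‖what‖ ^ 2 - Λ₁ * ‖what‖ - Λ₀ ≤ 0 := by nlinarith
  refine ⟨h1, h2, h3, ?_⟩
  have hs : 0 ≤ Λ₁ ^ 2 + 4 * μ * Λ₀ := by positivity
  have hsq := Real.sq_sqrt hs
  have hsnn := Real.sqrt_nonneg (Λ₁ ^ 2 + 4 * μ * Λ₀)
  rw [le_div_iff₀ (by positivity : (0:ℝ) < 2 * μ)]
  nlinarith [norm_nonneg what, sq_nonneg (2 * μ * ‖what‖ - Λ₁ - Real.sqrt (Λ₁ ^ 2 + 4 * μ * Λ₀))]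
end

section
/- Lemma 4 (bound from negative multiplier): If q(τ) ≤ 0, q(τ) + ⟨g ŵ, p⟩ > 0, and (L̂+β)⟨g ŵ, p⟩ = (q + ⟨g ŵ, p⟩)⟨∇_w L̂, ŵ⟩ holds, then ⟨∇_w L̂, ŵ⟩ ≥ L̂ + β, hence β ≤ ⟨∇_w L̂, ŵ⟩ − L̂ ≤ σ(|ŵ|). If furthermore β = σ((c+1)/T₀) and σ is strictly increasing where needed, then |ŵ| ≥ (c+1)/T₀. -/
open RealInnerProductSpace

/-- Lemma 4: if `q ≤ 0`, `q + ⟨gŵ,p⟩ > 0` and the maximum-principle identity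
`(L̂+β)⟨gŵ,p⟩ = (q+⟨gŵ,p⟩)⟨∇L(ŵ),ŵ⟩` holds, then `⟨∇L(ŵ),ŵ⟩ ≥ L̂+β`, hence
`β ≤ ⟨∇L(ŵ),ŵ⟩ − L̂ ≤ σ(|ŵ|)`; if moreover `β = σ((c+1)/T₀)` with `σ` strictly
increasing, then `|ŵ| ≥ (c+1)/T₀`. -/
theorem stmt14 {n m : ℕ}
    (L : EuclideanSpace ℝ (Fin m) → ℝ)
    (gradL : EuclideanSpace ℝ (Fin m) → EuclideanSpace ℝ (Fin m))
    (σ : ℝ → ℝ) (hσmono : StrictMono σ)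
    (hσ : ∀ u : EuclideanSpace ℝ (Fin m), ⟪gradL u, u⟫ - L u ≤ σ ‖u‖)
    (c T₀ β : ℝ) (hT₀ : 0 < T₀) (hβ : β = σ ((c + 1) / T₀))
    (p gw : EuclideanSpace ℝ (Fin n)) (what : EuclideanSpace ℝ (Fin m)) (q : ℝ)
    (hq : q ≤ 0) (hLβ : 0 < L what + β)
    (hpos : 0 < q + ⟪gw, p⟫)
    (hmax : (L what + β) * ⟪gw, p⟫ = (q + ⟪gw, p⟫) * ⟪gradL what, what⟫) :
    L what + β ≤ ⟪gradL what, what⟫ ∧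
    β ≤ ⟪gradL what, what⟫ - L what ∧
    ⟪gradL what, what⟫ - L what ≤ σ ‖what‖ ∧
    (c + 1) / T₀ ≤ ‖what‖ := by
  have h1 : L what + β ≤ ⟪gradL what, what⟫ := by
    nlinarith [hmax, hpos, hq, hLβ]
  have h3 : ⟪gradL what, what⟫ - L what ≤ σ ‖what‖ := hσ what
  refine ⟨h1, by linarith, h3, ?_⟩
  have : σ ((c + 1) / T₀) ≤ σ ‖what‖ := by rw [← hβ]; linarith
  exact (hσmono.le_iff_le).mp this
end

section
/- Let C : ℝⁿ → ℝⁿ be linear and K ⊂ ℝⁿ a convex cone. Then the dual (polar) cone of the cone {(x,v) ∈ ℝⁿ × ℝⁿ : v ∈ Cx + K} equals {(x*, v*) ∈ ℝⁿ × ℝⁿ : x* = −C*v*, v* ∈ K*}, where K* = {y : ⟨y, k⟩ ≥ 0 for all k ∈ K}. -/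
open RealInnerProductSpace

/-- Proposition 4: for a linear map `C : ℝⁿ → ℝⁿ` and a convex cone `K ⊂ ℝⁿ`, the dual cone
of `{(x,v) : v ∈ Cx + K}` equals `{(x*,v*) : x* = −C*v*, v* ∈ K*}`, where
`K* = {y : ⟨y,k⟩ ≥ 0 for all k ∈ K}`. -/
theorem stmt17 {n : ℕ} (C : EuclideanSpace ℝ (Fin n) →ₗ[ℝ] EuclideanSpace ℝ (Fin n))
    (K : Set (EuclideanSpace ℝ (Fin n)))
    (hKconv : Convex ℝ K) (hK0 : (0 : EuclideanSpace ℝ (Fin n)) ∈ K)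
    (hKcone : ∀ c : ℝ, 0 ≤ c → ∀ x ∈ K, c • x ∈ K) :
    { p : EuclideanSpace ℝ (Fin n) × EuclideanSpace ℝ (Fin n) |
        ∀ z : EuclideanSpace ℝ (Fin n) × EuclideanSpace ℝ (Fin n),
          (∃ k ∈ K, z.2 = C z.1 + k) → 0 ≤ ⟪p.1, z.1⟫ + ⟪p.2, z.2⟫ }
    = { p : EuclideanSpace ℝ (Fin n) × EuclideanSpace ℝ (Fin n) |
        p.1 = -(LinearMap.adjoint C) p.2 ∧ ∀ k ∈ K, 0 ≤ ⟪p.2, k⟫ } := by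
  ext p
  simp only [Set.mem_setOf_eq]
  constructor
  · intro h
    have key : ∀ x, ∀ k ∈ K, 0 ≤ ⟪p.1, x⟫ + ⟪p.2, C x + k⟫ := by
      intro x k hk
      exact h (x, C x + k) ⟨k, hk, rfl⟩
    have h2 : ∀ k ∈ K, 0 ≤ ⟪p.2, k⟫ := by
      intro k hk
      have := key 0 k hk
      simpa using this
    have h1 : p.1 + (LinearMap.adjoint C) p.2 = 0 := by
      have hx : ∀ x, 0 ≤ ⟪p.1 + (LinearMap.adjoint C) p.2, x⟫ := by
        intro x
        have := key x 0 hK0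
        rw [add_zero] at this
        rw [inner_add_left, LinearMap.adjoint_inner_left]
        linarith [this]
      have := hx (-(p.1 + (LinearMap.adjoint C) p.2))
      rw [inner_neg_right] at this
      have h0 : ⟪p.1 + (LinearMap.adjoint C) p.2, p.1 + (LinearMap.adjoint C) p.2⟫ ≤ 0 := by
        linarith
      exact real_inner_self_nonpos.mp h0
    refine ⟨by linear_combination (norm := module) h1, h2⟩
  · rintro ⟨h1, h2⟩ z ⟨k, hk, hz⟩
    rw [hz, h1, inner_add_right, inner_neg_left, LinearMap.adjoint_inner_left]
    have := h2 k hk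
    linarith
end
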